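/- arXiv:1407.2812 — 2 statements merged into one kernel-verified Lean document; each statement's English description precedes it below -/
import Mathlib

section
/- Let X₁, ..., X_m be i.i.d. standard normal random variables and let T = Σ X_i². Then for every x > 0, P(T ≥ m + 2√(mx) + 2x) ≤ e^{-x}. -/
/-!
Chernoff bound. For `t < 1/2` a standard Gaussian `Y` has `𝔼 exp (t Y²) = (1 - 2t)^(-1/2)`, so
`P(T ≥ c) ≤ exp (-t c - (m/2) log (1 - 2t))`. Take `t = √x / (√m + 2√x)`, for which
`1 - 2t = √m / (√m + 2√x)`, and bound `-log (1 - u) ≤ u + u² / (2 (1 - u))` (compare the series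
`∑ uⁿ / n` with `u + ∑_{n ≥ 2} uⁿ / 2`); for `c = m + 2√(mx) + 2x` the exponent becomes exactly `-x`.
-/

open MeasureTheory ProbabilityTheory Real

theorem Real.neg_log_one_sub_le {u : ℝ} (hu0 : 0 ≤ u) (hu1 : u < 1) :
    -log (1 - u) ≤ u + u ^ 2 / (2 * (1 - u)) := by
  have hlog := Real.hasSum_pow_div_log_of_abs_lt_one (by rwa [abs_of_nonneg hu0])
  have htail : HasSum (fun n : ℕ ↦ u ^ (n + 2) / (n + 2)) (-log (1 - u) - u) := by
    have := (hasSum_nat_add_iff' 1).mpr hlog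
    simp only [Finset.sum_range_one, pow_one, Nat.cast_zero, zero_add, div_one] at this
    refine this.congr_fun fun n ↦ ?_
    push_cast
    ring
  have hgeom : HasSum (fun n : ℕ ↦ u ^ 2 / 2 * u ^ n) (u ^ 2 / 2 * (1 - u)⁻¹) :=
    (hasSum_geometric_of_lt_one hu0 hu1).mul_left _
  have hle : -log (1 - u) - u ≤ u ^ 2 / 2 * (1 - u)⁻¹ := hasSum_le (fun n ↦ by
    rw [show u ^ 2 / 2 * u ^ n = u ^ (n + 2) / 2 by ring]
    gcongr
    linarith [n.cast_nonneg (α := ℝ)]) htail hgeom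
  have : 0 < 1 - u := by linarith
  field_simp at hle ⊢
  linarith

theorem Real.inv_sqrt_pow_eq_exp {y : ℝ} (hy : 0 < y) (n : ℕ) :
    (√y)⁻¹ ^ n = exp (-(n / 2) * log y) := by
  rw [sqrt_eq_rpow, ← rpow_neg hy.le, ← rpow_mul_natCast hy.le, rpow_def_of_pos hy]
  ring_nf

theorem integral_exp_mul_sq_gaussianReal {t : ℝ} (ht : t < 1 / 2) :
    ∫ y, exp (t * y ^ 2) ∂gaussianReal 0 1 = (√(1 - 2 * t))⁻¹ := by
  have hpdf (y : ℝ) : gaussianPDFReal 0 1 y • exp (t * y ^ 2)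
      = (√(2 * π))⁻¹ * exp (-(1 / 2 - t) * y ^ 2) := by
    rw [gaussianPDFReal_def, smul_eq_mul, mul_assoc, ← exp_add, NNReal.coe_one]
    congr 2
    norm_num
    ring
  rw [integral_gaussianReal_eq_integral_smul one_ne_zero]
  simp_rw [hpdf]
  rw [integral_const_mul, integral_gaussian, ← sqrt_inv, ← sqrt_mul (by positivity), ← sqrt_inv]
  congr 1
  have : (1 : ℝ) - 2 * t ≠ 0 := by linarith
  field_simp

theorem mgf_sq_of_map_eq_gaussianReal {Ω : Type*} [MeasurableSpace Ω] {μ : Measure Ω}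
    [IsProbabilityMeasure μ] {X : Ω → ℝ} (hX : μ.map X = gaussianReal 0 1) {t : ℝ}
    (ht : t < 1 / 2) :
    mgf (fun ω ↦ X ω ^ 2) μ t = (√(1 - 2 * t))⁻¹ := by
  have hXm : AEMeasurable X μ := .of_map_ne_zero (by simp [hX, NeZero.ne])
  rw [← integral_exp_mul_sq_gaussianReal ht, ← hX, ← mgf, mgf_map hXm (by fun_prop)]
  rfl

theorem measureReal_le_sum_sq_le_of_gaussianReal {Ω ι : Type*} [MeasurableSpace Ω]
    {μ : Measure Ω} [IsProbabilityMeasure μ] {X : ι → Ω → ℝ} (hindep : iIndepFun X μ)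
    (hX : ∀ i, μ.map (X i) = gaussianReal 0 1) (s : Finset ι) (c : ℝ) {t : ℝ} (ht0 : 0 ≤ t)
    (ht : t < 1 / 2) :
    μ.real {ω | c ≤ ∑ i ∈ s, X i ω ^ 2} ≤ exp (-t * c) * (√(1 - 2 * t))⁻¹ ^ s.card := by
  have hXm (i : ι) : AEMeasurable (X i) μ := .of_map_ne_zero (by simp [hX, NeZero.ne])
  have hindep_sq : iIndepFun (fun i ω ↦ X i ω ^ 2) μ :=
    hindep.comp (fun _ y ↦ y ^ 2) fun _ ↦ by fun_prop
  have hmgf : mgf (∑ i ∈ s, fun ω ↦ X i ω ^ 2) μ t = (√(1 - 2 * t))⁻¹ ^ s.card := by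
    rw [hindep_sq.mgf_sum₀ (fun i ↦ (hXm i).pow_const 2),
      Finset.prod_congr rfl fun i _ ↦ mgf_sq_of_map_eq_gaussianReal (hX i) ht,
      Finset.prod_const]
  have hint : Integrable (fun ω ↦ exp (t * (∑ i ∈ s, fun ω ↦ X i ω ^ 2) ω)) μ := by
    refine mgf_pos_iff.mp ?_
    rw [hmgf]
    have : 0 < 1 - 2 * t := by linarith
    positivity
  simpa only [Finset.sum_apply, hmgf] using measure_ge_le_exp_mul_mgf c ht0 hint

theorem laurentMassart_exponent_le {m x θ : ℝ} (hm : 0 < m) (hx : 0 < x)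
    (hθ : θ = √x / (√m + 2 * √x)) :
    -θ * (m + 2 * √(m * x) + 2 * x) - m / 2 * log (1 - 2 * θ) ≤ -x := by
  obtain ⟨s, hs, rfl⟩ : ∃ s, 0 < s ∧ s ^ 2 = m := ⟨√m, sqrt_pos.2 hm, sq_sqrt hm.le⟩
  obtain ⟨r, hr, rfl⟩ : ∃ r, 0 < r ∧ r ^ 2 = x := ⟨√x, sqrt_pos.2 hx, sq_sqrt hx.le⟩
  rw [sqrt_sq hs.le, sqrt_sq hr.le] at hθ
  rw [← mul_pow, sqrt_sq (by positivity)]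
  have hlog := neg_log_one_sub_le (u := 2 * θ) (by rw [hθ]; positivity)
    (by rw [hθ, mul_div_assoc', div_lt_one (by positivity)]; linarith)
  have h_one_sub : 1 - 2 * θ = s / (s + 2 * r) := by
    rw [hθ]
    field_simp
    ring
  have key : -θ * (s ^ 2 + 2 * (s * r) + 2 * r ^ 2)
      + s ^ 2 / 2 * (2 * θ + (2 * θ) ^ 2 / (2 * (1 - 2 * θ))) = -r ^ 2 := by
    rw [h_one_sub, hθ]
    field_simp
    ring
  nlinarith [mul_le_mul_of_nonneg_left hlog (by positivity : (0:ℝ) ≤ s ^ 2 / 2)]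

theorem chisq_upper_tail {Ω : Type*} [MeasureSpace Ω] [IsProbabilityMeasure (ℙ : Measure Ω)]
    (m : ℕ) (X : Fin m → Ω → ℝ)
    (hindep : iIndepFun X ℙ)
    (hX : ∀ i, Measure.map (X i) ℙ = gaussianReal 0 1)
    (x : ℝ) (hx : 0 < x) :
    ℙ {ω | (m : ℝ) + 2 * Real.sqrt (m * x) + 2 * x ≤ ∑ i, (X i ω) ^ 2}
      ≤ ENNReal.ofReal (Real.exp (-x)) := by
  rcases Nat.eq_zero_or_pos m with rfl | hm
  · simp [not_le.2 (by positivity : 0 < 2 * x)]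
  set θ := √x / (√m + 2 * √x) with hθ
  have hθ0 : 0 ≤ θ := by positivity
  have hθ1 : θ < 1 / 2 := by
    rw [hθ, div_lt_iff₀ (by positivity)]
    linarith [sqrt_pos.2 (Nat.cast_pos.2 hm : (0 : ℝ) < m)]
  rw [← ofReal_measureReal]
  refine ENNReal.ofReal_le_ofReal ?_
  calc (ℙ : Measure Ω).real {ω | (m : ℝ) + 2 * √(m * x) + 2 * x ≤ ∑ i, X i ω ^ 2}
      ≤ exp (-θ * (m + 2 * √(m * x) + 2 * x)) * (√(1 - 2 * θ))⁻¹ ^ m := by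
        simpa using measureReal_le_sum_sq_le_of_gaussianReal hindep hX Finset.univ _ hθ0 hθ1
    _ = exp (-θ * (m + 2 * √(m * x) + 2 * x) - m / 2 * log (1 - 2 * θ)) := by
        rw [inv_sqrt_pow_eq_exp (by linarith), ← exp_add]
        ring_nf
    _ ≤ exp (-x) := exp_le_exp.2 (laurentMassart_exponent_le (by positivity) hx hθ)
end

section
/- Let h₀ be the N(0, I_n) density on ℝⁿ and, for j = 1, ..., K with Kd ≤ n, let h_j be the density of N(μ^{(j)}, I_n) where μ^{(j)} has entries μ^{(j)}_i = γ f₀((i - (j-1)d)/d) for (j-1)d < i ≤ jd and 0 otherwise. Let g = K^{-1} Σ_{j=1}^K h_j. Then ∫ g²/h₀ = 1 + K^{-1} (exp(γ² Σ_{i=1}^d f₀(i/d)²) - 1). -/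
open MeasureTheory

/-- The density of `N(μ, I_n)` with respect to Lebesgue measure on `ℝⁿ`. -/
noncomputable def gaussDensity (n : ℕ) (μ x : EuclideanSpace ℝ (Fin n)) : ℝ :=
  (2 * Real.pi) ^ (-(n : ℝ) / 2) * Real.exp (-‖x - μ‖ ^ 2 / 2)

/-- The mean vector placing the signal `γ f₀` on the `j`-th (0-indexed) block of length `d`. -/
noncomputable def signalMean (n d : ℕ) (γ : ℝ) (f₀ : ℝ → ℝ) (j : ℕ) :
    EuclideanSpace ℝ (Fin n) :=
  WithLp.toLp 2 fun i : Fin n =>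
    if j * d ≤ (i : ℕ) ∧ (i : ℕ) < (j + 1) * d then
      γ * f₀ (((i : ℕ) - j * d + 1) / d) else 0

/-!
Completing the square gives `h_μ h_ν / h_0 = exp ⟪μ, ν⟫ * h_{μ+ν}`, so the χ²-affinity of a
mixture `∑ w_j h_{μ_j}` is `∑_{j,j'} w_j w_{j'} exp ⟪μ_j, μ_{j'}⟫`. The signal means have
disjoint supports, so of these `K²` exponentials only the `K` diagonal ones, each
`exp ‖μ_j‖²`, differ from `1`.
-/

open Real Finset
open scoped RealInnerProductSpace

section Gaussian

variable {n : ℕ}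

theorem integral_gaussDensity (μ : EuclideanSpace ℝ (Fin n)) : ∫ x, gaussDensity n μ x = 1 := by
  simp only [gaussDensity, integral_const_mul]
  rw [integral_sub_right_eq_self (fun x => exp (-‖x‖ ^ 2 / 2)) μ]
  have hstd : ∫ x : EuclideanSpace ℝ (Fin n), exp (-‖x‖ ^ 2 / 2) = (2 * π) ^ ((n : ℝ) / 2) := by
    convert GaussianFourier.integral_rexp_neg_mul_sq_norm (V := EuclideanSpace ℝ (Fin n))
      (b := 1 / 2) (by norm_num) using 2 with x
    · ring_nf
    · field_simp
    · simp
  rw [hstd, ← rpow_add (by positivity), neg_div, neg_add_cancel, rpow_zero]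

theorem integrable_gaussDensity (μ : EuclideanSpace ℝ (Fin n)) : Integrable (gaussDensity n μ) :=
  .of_integral_ne_zero (by simp [integral_gaussDensity])

theorem gaussDensity_mul_gaussDensity_div (μ ν x : EuclideanSpace ℝ (Fin n)) :
    gaussDensity n μ x * gaussDensity n ν x / gaussDensity n 0 x
      = exp ⟪μ, ν⟫ * gaussDensity n (μ + ν) x := by
  unfold gaussDensity
  rw [div_eq_iff (by positivity)]
  have hexp : exp (-‖x - μ‖ ^ 2 / 2) * exp (-‖x - ν‖ ^ 2 / 2)
      = exp ⟪μ, ν⟫ * exp (-‖x - (μ + ν)‖ ^ 2 / 2) * exp (-‖x - 0‖ ^ 2 / 2) := by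
    simp only [← exp_add, sub_zero, norm_sub_sq_real, norm_add_sq_real, inner_add_right]
    ring_nf
  linear_combination ((2 * π) ^ (-(n : ℝ) / 2)) ^ 2 * hexp

theorem integral_sq_sum_div_gaussDensity {ι : Type*} (s : Finset ι) (w : ι → ℝ)
    (μ : ι → EuclideanSpace ℝ (Fin n)) :
    ∫ x, (∑ j ∈ s, w j * gaussDensity n (μ j) x) ^ 2 / gaussDensity n 0 x
      = ∑ j ∈ s, ∑ j' ∈ s, w j * w j' * exp ⟪μ j, μ j'⟫ := by
  have hpt : ∀ x, (∑ j ∈ s, w j * gaussDensity n (μ j) x) ^ 2 / gaussDensity n 0 x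
      = ∑ j ∈ s, ∑ j' ∈ s, w j * w j' * exp ⟪μ j, μ j'⟫ * gaussDensity n (μ j + μ j') x := by
    intro x
    simp only [sq, sum_mul_sum, sum_div]
    refine sum_congr rfl fun j _ => sum_congr rfl fun j' _ => ?_
    rw [mul_mul_mul_comm, mul_div_assoc, gaussDensity_mul_gaussDensity_div]
    ring
  have hint : ∀ j j', Integrable fun x =>
      w j * w j' * exp ⟪μ j, μ j'⟫ * gaussDensity n (μ j + μ j') x :=
    fun j j' => (integrable_gaussDensity _).const_mul _
  simp_rw [hpt]
  rw [integral_finsetSum _ fun j _ => integrable_finsetSum _ fun j' _ => hint j j']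
  refine sum_congr rfl fun j _ => ?_
  rw [integral_finsetSum _ fun j' _ => hint j j']
  simp [integral_const_mul, integral_gaussDensity]

end Gaussian

theorem sum_sum_exp_inner_of_orthogonal {ι E : Type*} [NormedAddCommGroup E]
    [InnerProductSpace ℝ E] [DecidableEq ι] (s : Finset ι) (μ : ι → E) (S : ℝ)
    (hself : ∀ j ∈ s, ⟪μ j, μ j⟫ = S) (horth : ∀ j ∈ s, ∀ j' ∈ s, j ≠ j' → ⟪μ j, μ j'⟫ = 0) :
    ∑ j ∈ s, ∑ j' ∈ s, exp ⟪μ j, μ j'⟫ = #s * (exp S - 1) + #s ^ 2 := by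
  have hexp : ∀ j ∈ s, ∀ j' ∈ s, exp ⟪μ j, μ j'⟫ = (if j = j' then exp S - 1 else 0) + 1 := by
    intro j hj j' hj'
    split_ifs with h
    · rw [← h, hself j hj]; ring
    · rw [horth j hj j' hj' h, exp_zero, zero_add]
  rw [sum_congr rfl fun j hj => sum_congr rfl (hexp j hj)]
  simp only [sum_add_distrib, sum_ite_eq, sum_ite_mem, inter_self, sum_sub_distrib, sum_const,
    nsmul_eq_mul, mul_one]
  ring

theorem Fin.sum_ite_block_eq_sum_range {M : Type*} [AddCommMonoid M] {n a d : ℕ} (h : a + d ≤ n)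
    (g : ℕ → M) :
    ∑ i : Fin n, (if a ≤ (i : ℕ) ∧ (i : ℕ) < a + d then g i else 0) = ∑ t ∈ range d, g (a + t) := by
  rw [Fin.sum_univ_eq_sum_range (fun i => if a ≤ i ∧ i < a + d then g i else 0), ← sum_filter]
  have : {i ∈ range n | a ≤ i ∧ i < a + d} = Ico a (a + d) := by
    ext i; simp only [mem_filter, mem_range, mem_Ico]; omega
  rw [this, sum_Ico_eq_sum_range, Nat.add_sub_cancel_left]

section SignalMean

variable {n d : ℕ} {γ : ℝ} {f₀ : ℝ → ℝ}

theorem inner_signalMean_of_ne {j j' : ℕ} (hne : j ≠ j') :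
    ⟪signalMean n d γ f₀ j, signalMean n d γ f₀ j'⟫ = 0 := by
  rw [PiLp.inner_apply]
  refine sum_eq_zero fun i _ => ?_
  simp only [signalMean, RCLike.inner_apply, conj_trivial]
  split_ifs with h h'
  · -- both `j` and `j'` would equal `i / d`
    exact absurd ((Nat.div_eq_of_lt_le h'.1 h'.2).symm.trans (Nat.div_eq_of_lt_le h.1 h.2)) hne
  all_goals simp

theorem inner_signalMean_self {j : ℕ} (hj : (j + 1) * d ≤ n) :
    ⟪signalMean n d γ f₀ j, signalMean n d γ f₀ j⟫
      = γ ^ 2 * ∑ i ∈ range d, f₀ (((i : ℝ) + 1) / d) ^ 2 := by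
  rw [PiLp.inner_apply, mul_sum]
  simp only [signalMean, RCLike.inner_apply, conj_trivial, ite_zero_mul_ite_zero, and_self]
  rw [add_one_mul] at hj ⊢
  refine (Fin.sum_ite_block_eq_sum_range hj
    fun m => γ * f₀ ((m - j * d + 1 : ℝ) / d) * (γ * f₀ ((m - j * d + 1 : ℝ) / d))).trans ?_
  refine sum_congr rfl fun t _ => ?_
  push_cast
  ring_nf

end SignalMean

theorem known_shape_affinity_general (n d K : ℕ) (hK : 0 < K) (hKd : K * d ≤ n)
    (γ : ℝ) (f₀ : ℝ → ℝ) :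
    ∫ x, ((K : ℝ)⁻¹ * ∑ j ∈ Finset.range K, gaussDensity n (signalMean n d γ f₀ j) x) ^ 2 /
        gaussDensity n 0 x
      = 1 + (K : ℝ)⁻¹ *
          (Real.exp (γ ^ 2 * ∑ i ∈ Finset.range d, f₀ (((i : ℝ) + 1) / d) ^ 2) - 1) := by
  set S := γ ^ 2 * ∑ i ∈ range d, f₀ (((i : ℝ) + 1) / d) ^ 2
  have hself : ∀ j ∈ range K, ⟪signalMean n d γ f₀ j, signalMean n d γ f₀ j⟫ = S :=
    fun j hj => inner_signalMean_self ((Nat.mul_le_mul_right d (mem_range.1 hj)).trans hKd)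
  have horth : ∀ j ∈ range K, ∀ j' ∈ range K, j ≠ j' →
      ⟪signalMean n d γ f₀ j, signalMean n d γ f₀ j'⟫ = 0 :=
    fun _ _ _ _ => inner_signalMean_of_ne
  simp only [mul_sum (range K)]
  rw [integral_sq_sum_div_gaussDensity]
  simp only [← mul_sum]
  rw [sum_sum_exp_inner_of_orthogonal _ _ S hself horth, card_range]
  field_simp
  ring

theorem known_shape_affinity (n d K : ℕ) (hd : 0 < d) (hK : 0 < K) (hKd : K * d ≤ n)
    (γ : ℝ) (f₀ : ℝ → ℝ) :
    ∫ x, ((K : ℝ)⁻¹ * ∑ j ∈ Finset.range K, gaussDensity n (signalMean n d γ f₀ j) x) ^ 2 /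
        gaussDensity n 0 x
      = 1 + (K : ℝ)⁻¹ *
          (Real.exp (γ ^ 2 * ∑ i ∈ Finset.range d, f₀ (((i : ℝ) + 1) / d) ^ 2) - 1) :=
  known_shape_affinity_general n d K hK hKd γ f₀
end
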